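/- Let q ∈ {0,…,n−1} and let Ω be a relatively compact open set in ℂⁿ. Then every function ψ which is upper semi-continuous on the closure of Ω and q-plurisubharmonic on Ω satisfies max over closure(Ω) of ψ = max over ∂Ω of ψ. -/

import Mathlib

open Set Metric
open scoped BigOperators

noncomputable section

/-- `ℂE n` is complex Euclidean space `ℂⁿ`. -/
abbrev ℂE (n : ℕ) := EuclideanSpace ℂ (Fin n)

/-- `ℝE k` is real Euclidean space `ℝᵏ`. -/
abbrev ℝE (k : ℕ) := EuclideanSpace ℝ (Fin k)

/-- The polydisc `Δ_s^n` of radius `s` centered at `0` in `ℂⁿ`. -/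
def polydisc (n : ℕ) (s : ℝ) : Set (ℂE n) := {z | ∀ j, ‖z j‖ < s}

/-- The Euclidean `(n-q, q)` Hartogs figure
`H_e = (Δ₁^{n-q} × Δ_r^{q}) ∪ (A_{R,1}^{n-q} × Δ₁^{q})`, where the first `n - q`
coordinates play the role of `Δ^{n-q}` and the last `q` coordinates the role of `Δ^{q}`. -/
def euclHartogsFigure (n q : ℕ) (r R : ℝ) : Set (ℂE n) :=
  {z | (∀ j, ‖z j‖ < 1) ∧
    ((∀ j : Fin n, n - q ≤ (j : ℕ) → ‖z j‖ < r) ∨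
     (∃ j : Fin n, (j : ℕ) < n - q ∧ R < ‖z j‖))}

/-- `(H, P)` is a (general) `(n-q, q)` Hartogs figure:  there are radii `0 < r, R < 1`
and a biholomorphic map `F` from the unit polydisc onto `P` carrying the Euclidean
Hartogs figure onto `H`. -/
def IsHartogsFigure (n q : ℕ) (H P : Set (ℂE n)) : Prop :=
  ∃ (r R : ℝ) (F G : ℂE n → ℂE n),
    0 < r ∧ r < 1 ∧ 0 < R ∧ R < 1 ∧
    DifferentiableOn ℂ F (polydisc n 1) ∧
    DifferentiableOn ℂ G P ∧
    (∀ z ∈ polydisc n 1, G (F z) = z) ∧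
    (∀ w ∈ P, F (G w) = w) ∧
    F '' polydisc n 1 = P ∧
    F '' euclHartogsFigure n q r R = H

/-- An open set `Ω ⊆ ℂⁿ` is Hartogs `q`-pseudoconvex if for every `(n-q, q)` Hartogs
figure `(H, P)` with `H ⊆ Ω` one has `P ⊆ Ω`. -/
def HartogsPseudoconvex (n q : ℕ) (Ω : Set (ℂE n)) : Prop :=
  ∀ H P : Set (ℂE n), IsHartogsFigure n q H P → H ⊆ Ω → P ⊆ Ω

/-- `U` is Hartogs `q`-pseudoconvex relatively to `V`: every point of `V ∩ ∂U` has a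
ball around it on which the intersection with `U` is Hartogs `q`-pseudoconvex. -/
def HartogsPseudoconvexRel (n q : ℕ) (U V : Set (ℂE n)) : Prop :=
  ∀ p ∈ V ∩ frontier U, ∃ r > 0, HartogsPseudoconvex n q (U ∩ ball p r)

/-- A set `S` is a (Hartogs) `q`-pseudoconcave subset of `Ω` if `Ω \ S` is Hartogs
`q`-pseudoconvex relatively to `Ω`. -/
def QPseudoconcaveIn (n q : ℕ) (S Ω : Set (ℂE n)) : Prop :=
  HartogsPseudoconvexRel n q (Ω \ S) Ω

/-- `h` is pluriharmonic on `W`: locally the real part of a holomorphic function. -/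
def PluriharmonicOn {n : ℕ} (h : ℂE n → ℝ) (W : Set (ℂE n)) : Prop :=
  ∀ z ∈ W, ∃ U : Set (ℂE n), IsOpen U ∧ z ∈ U ∧ U ⊆ W ∧
    ∃ f : ℂE n → ℂ, DifferentiableOn ℂ f U ∧ ∀ w ∈ U, h w = (f w).re

/-- `ψ` is subpluriharmonic on `Ω`: it is upper semicontinuous and for every closed ball
contained in `Ω` and every function pluriharmonic near that ball dominating `ψ` on the
bounding sphere, `ψ` is dominated on the whole closed ball. -/
def SubpluriharmonicOn {n : ℕ} (ψ : ℂE n → ℝ) (Ω : Set (ℂE n)) : Prop :=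
  UpperSemicontinuousOn ψ Ω ∧
  ∀ (c : ℂE n) (ρ : ℝ), 0 < ρ → closedBall c ρ ⊆ Ω →
    ∀ (W : Set (ℂE n)) (h : ℂE n → ℝ), IsOpen W → closedBall c ρ ⊆ W →
      PluriharmonicOn h W → (∀ z ∈ sphere c ρ, ψ z ≤ h z) →
      ∀ z ∈ closedBall c ρ, ψ z ≤ h z

/-- `ψ` is `q`-plurisubharmonic on `Ω`: it is upper semicontinuous on `Ω` and
subpluriharmonic on the intersection of `Ω` with every complex affine subspace of
dimension `q+1` (parameterized by an affine isometric embedding of `ℂ^{q+1}`). -/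
def QPlurisubharmonicOn (n q : ℕ) (ψ : ℂE n → ℝ) (Ω : Set (ℂE n)) : Prop :=
  UpperSemicontinuousOn ψ Ω ∧
  ∀ (z₀ : ℂE n) (L : ℂE (q+1) →ₗᵢ[ℂ] ℂE n),
    SubpluriharmonicOn (fun w => ψ (z₀ + L w)) ((fun w : ℂE (q+1) => z₀ + L w) ⁻¹' Ω)

/-- `ψ` is strictly `q`-plurisubharmonic on `Ω`:  for every smooth nonnegative `θ` with
compact support in `Ω` there is `ε₀ > 0` such that `ψ + εθ` is `q`-plurisubharmonic on
`Ω` for all `|ε| ≤ ε₀`. -/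
def StrictlyQPlurisubharmonicOn (n q : ℕ) (ψ : ℂE n → ℝ) (Ω : Set (ℂE n)) : Prop :=
  UpperSemicontinuousOn ψ Ω ∧
  ∀ θ : ℂE n → ℝ, ContDiff ℝ (⊤ : ℕ∞) θ → HasCompactSupport θ → tsupport θ ⊆ Ω →
    (∀ z, 0 ≤ θ z) → ∃ ε₀ > 0, ∀ ε : ℝ, |ε| ≤ ε₀ →
      QPlurisubharmonicOn n q (fun z => ψ z + ε * θ z) Ω

/-- The Levi form of a (C²) function `ψ` at `p`, as the quadratic form
`X ↦ L_ψ(p)(X, X)`; for a real-valued `ψ` one has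
`L_ψ(p)(X,X) = ¼ (D²ψ(p)(X,X) + D²ψ(p)(iX,iX))`. -/
def leviQuad {n : ℕ} (ψ : ℂE n → ℝ) (p X : ℂE n) : ℝ :=
  (iteratedFDeriv ℝ 2 ψ p ![X, X]
    + iteratedFDeriv ℝ 2 ψ p ![(Complex.I : ℂ) • X, (Complex.I : ℂ) • X]) / 4

/-- The complex differential `∂ϱ(p)(X) = Σ_l (∂ϱ/∂z_l)(p) X_l` of a real-valued function,
expressed via the real differential: `∂ϱ(p)(X) = ½ (Dϱ(p)(X) - i · Dϱ(p)(iX))`. -/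
def holoDifferential {n : ℕ} (ϱ : ℂE n → ℝ) (p X : ℂE n) : ℂ :=
  ((fderiv ℝ ϱ p X : ℂ) - Complex.I * (fderiv ℝ ϱ p ((Complex.I : ℂ) • X) : ℂ)) / 2

/-- `U` is strictly `q`-pseudoconvex at a boundary point `p`: there is a local C² defining
function `ϱ` (with nonvanishing gradient at `p`) whose Levi form at `p` has at most `q`
non-positive eigenvalues on the holomorphic tangent space `H_p ∂U = ker ∂ϱ(p)`, i.e. it is
positive definite on a complex subspace of `H_p ∂U` of dimension at least `n - 1 - q`. -/
def StrictlyQPseudoconvexAt (n q : ℕ) (U : Set (ℂE n)) (p : ℂE n) : Prop :=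
  ∃ (W : Set (ℂE n)) (ϱ : ℂE n → ℝ), IsOpen W ∧ p ∈ W ∧ ContDiffOn ℝ 2 ϱ W ∧
    fderiv ℝ ϱ p ≠ 0 ∧ U ∩ W = {z ∈ W | ϱ z < 0} ∧
    ∃ T : Submodule ℂ (ℂE n), n - 1 - q ≤ Module.finrank ℂ T ∧
      (∀ X ∈ T, holoDifferential ϱ p X = 0) ∧
      (∀ X ∈ T, X ≠ 0 → 0 < leviQuad ϱ p X)

/-- `U` is Levi `q`-pseudoconvex at a boundary point `p`: there is a local C² defining
function `ϱ` (with nonvanishing gradient at `p`) whose Levi form at `p` has at most `q`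
negative eigenvalues on the holomorphic tangent space `H_p ∂U = ker ∂ϱ(p)`, i.e. it is
positive semi-definite on a complex subspace of `H_p ∂U` of dimension at least `n - 1 - q`. -/
def LeviQPseudoconvexAt (n q : ℕ) (U : Set (ℂE n)) (p : ℂE n) : Prop :=
  ∃ (W : Set (ℂE n)) (ϱ : ℂE n → ℝ), IsOpen W ∧ p ∈ W ∧ ContDiffOn ℝ 2 ϱ W ∧
    fderiv ℝ ϱ p ≠ 0 ∧ U ∩ W = {z ∈ W | ϱ z < 0} ∧
    ∃ T : Submodule ℂ (ℂE n), n - 1 - q ≤ Module.finrank ℂ T ∧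
      (∀ X ∈ T, holoDifferential ϱ p X = 0) ∧
      (∀ X ∈ T, 0 ≤ leviQuad ϱ p X)

/-- `S` is a `d`-dimensional complex submanifold of the open set `W ⊆ ℂⁿ`:  near each of
its points it is the zero set of a holomorphic submersion to `ℂ^{n-d}`. -/
def IsComplexSubmanifoldOfDim (n d : ℕ) (S W : Set (ℂE n)) : Prop :=
  S ⊆ W ∧ ∀ p ∈ S, ∃ U : Set (ℂE n), IsOpen U ∧ p ∈ U ∧ U ⊆ W ∧
    ∃ f : ℂE n → ℂE (n - d), DifferentiableOn ℂ f U ∧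
      S ∩ U = {z ∈ U | f z = 0} ∧
      Function.Surjective (fderiv ℂ f p)

/-- `Γ` is locally foliated by `d`-dimensional complex submanifolds: near each of its
points, `Γ` is a disjoint union of `d`-dimensional complex submanifolds. -/
def LocallyFoliatedBy (n d : ℕ) (Γ : Set (ℂE n)) : Prop :=
  ∀ p ∈ Γ, ∃ U : Set (ℂE n), IsOpen U ∧ p ∈ U ∧
    ∃ 𝒜 : Set (Set (ℂE n)), (∀ L ∈ 𝒜, IsComplexSubmanifoldOfDim n d L U) ∧
      ⋃₀ 𝒜 = Γ ∩ U ∧ 𝒜.Pairwise Disjoint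

/-- `A` is an analytic subset of the open set `W`:  locally (in `W`) it is the common zero
set of finitely many holomorphic functions. -/
def IsAnalyticSubsetOf (n : ℕ) (A W : Set (ℂE n)) : Prop :=
  A ⊆ W ∧ ∀ p ∈ W, ∃ U : Set (ℂE n), IsOpen U ∧ p ∈ U ∧ U ⊆ W ∧
    ∃ (m : ℕ) (f : Fin m → ℂE n → ℂ), (∀ i, DifferentiableOn ℂ (f i) U) ∧
      A ∩ U = {z ∈ U | ∀ i, f i z = 0}

/-- `dim_z A ≥ q`:  arbitrarily close to `z` there are (regular) points of `A` near which
`A` is a complex submanifold of dimension at least `q`. -/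
def analyticDimGE (n : ℕ) (A : Set (ℂE n)) (z : ℂE n) (q : ℕ) : Prop :=
  ∀ ε > 0, ∃ w ∈ A, dist w z < ε ∧ ∃ (U : Set (ℂE n)) (d : ℕ), q ≤ d ∧
    IsOpen U ∧ w ∈ U ∧ IsComplexSubmanifoldOfDim n d (A ∩ U) U

/-- A family of sets indexed by `t ∈ [0,1]` which is continuous in the Hausdorff
distance. -/
def HausdorffContinuousFamily {n : ℕ} (A : ℝ → Set (ℂE n)) : Prop :=
  ∀ t ∈ Icc (0:ℝ) 1, ∀ ε > 0, ∃ δ > 0, ∀ s ∈ Icc (0:ℝ) 1,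
    |s - t| < δ → hausdorffDist (A s) (A t) < ε

/-- The point `(z, u + iv, ζ) ∈ ℂⁿ × ℂᵏ × ℂᵖ = ℂ^{n+k+p}`. -/
def mkPt (n k p : ℕ) (z : ℂE n) (u v : ℝE k) (ζ : ℂE p) : ℂE (n + k + p) :=
  (EuclideanSpace.equiv (Fin (n + k + p)) ℂ).symm fun j =>
    if h1 : (j : ℕ) < n then z ⟨j, h1⟩
    else if h2 : (j : ℕ) < n + k then
      ((u ⟨(j : ℕ) - n, by omega⟩ : ℝ) : ℂ) + Complex.I * ((v ⟨(j : ℕ) - n, by omega⟩ : ℝ) : ℂ)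
    else ζ ⟨(j : ℕ) - n - k, by have := j.isLt; omega⟩

/-- The graph `Γ(f) = {(z, u + iv, ζ) : (z,u) ∈ G, (v,ζ) = f(z,u)} ⊆ ℂ^{n+k+p}` of a map
`f = (f_v, f_ζ) : G → ℝᵏ × ℂᵖ` defined on `G ⊆ ℂⁿ × ℝᵏ`. -/
def graphSet (n k p : ℕ) (G : Set (ℂE n × ℝE k)) (f : ℂE n × ℝE k → ℝE k × ℂE p) :
    Set (ℂE (n + k + p)) :=
  {Z | ∃ z u, (z, u) ∈ G ∧ Z = mkPt n k p z u (f (z, u)).1 (f (z, u)).2}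

/-- The set `G × ℝᵏ_v × ℂᵖ_ζ ⊆ ℂ^{n+k+p}` over `G ⊆ ℂⁿ × ℝᵏ_u`. -/
def ambientSet (n k p : ℕ) (G : Set (ℂE n × ℝE k)) : Set (ℂE (n + k + p)) :=
  {Z | ∃ z u v ζ, (z, u) ∈ G ∧ Z = mkPt n k p z u v ζ}


/-- An upper semicontinuous real function on a nonempty compact set attains its maximum. -/
theorem usc_exists_max {X : Type*} [TopologicalSpace X] {K : Set X} (hK : IsCompact K)
    (hne : K.Nonempty) {f : X → ℝ} (hf : UpperSemicontinuousOn f K) :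
    ∃ x ∈ K, ∀ y ∈ K, f y ≤ f x := by
  classical
  by_contra hcon
  push_neg at hcon
  choose! g hgK hgf using hcon
  have hnb : ∀ x ∈ K, {z | z ∈ K → f z < f (g x)} ∈ nhds x := by
    intro x hx
    have h1 : ∀ᶠ z in nhdsWithin x K, f z < f (g x) := hf x hx (f (g x)) (hgf x hx)
    rw [eventually_nhdsWithin_iff] at h1
    exact h1
  obtain ⟨t, htK, hcover⟩ := hK.elim_nhds_subcover (fun x => {z | z ∈ K → f z < f (g x)})
    hnb
  have htne : t.Nonempty := by
    obtain ⟨x0, hx0⟩ := hne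
    obtain ⟨i, hi, -⟩ := Set.mem_iUnion₂.mp (hcover hx0)
    exact ⟨i, hi⟩
  obtain ⟨b, hb, hbmax⟩ := t.exists_max_image (fun x => f (g x)) htne
  have hgbK : g b ∈ K := hgK b (htK b hb)
  obtain ⟨i, hi, hgi⟩ := Set.mem_iUnion₂.mp (hcover hgbK)
  have h2 : f (g b) < f (g i) := hgi hgbK
  have h3 : f (g i) ≤ f (g b) := hbmax i hi
  linarith

/-- There is a complex-linear isometric embedding `ℂᵐ → ℂⁿ` whenever `m ≤ n`. -/
theorem exists_linear_isometry_of_le (m n : ℕ) (h : m ≤ n) :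
    Nonempty (ℂE m →ₗᵢ[ℂ] ℂE n) := by
  classical
  let T : ℂE m →ₗ[ℂ] ℂE n :=
    { toFun := fun x => WithLp.toLp 2 (fun j : Fin n => if hj : (j : ℕ) < m then x ⟨j, hj⟩ else 0)
      map_add' := by
        intro x y
        ext j
        by_cases hj : (j : ℕ) < m <;> simp [hj, PiLp.add_apply]
      map_smul' := by
        intro c x
        ext j
        by_cases hj : (j : ℕ) < m <;> simp [hj, PiLp.smul_apply] }
  have key : ∀ x y : ℂE m, (inner ℂ (T x) (T y) : ℂ) = (inner ℂ x y : ℂ) := by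
    intro x y
    rw [PiLp.inner_apply, PiLp.inner_apply]
    set F : ℕ → ℂ := fun k =>
      if hk : k < m then (inner ℂ (x ⟨k, hk⟩) (y ⟨k, hk⟩) : ℂ) else 0 with hF
    have h1 : ∀ j : Fin n, (inner ℂ (T x j) (T y j) : ℂ) = F (j : ℕ) := by
      intro j
      by_cases hj : (j : ℕ) < m
      · simp only [T, LinearMap.coe_mk, AddHom.coe_mk, dif_pos hj, hF]
      · simp only [T, LinearMap.coe_mk, AddHom.coe_mk, dif_neg hj, hF, inner_zero_left]
    calc ∑ j : Fin n, (inner ℂ (T x j) (T y j) : ℂ)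
        = ∑ j : Fin n, F (j : ℕ) := Finset.sum_congr rfl fun j _ => h1 j
      _ = ∑ k ∈ Finset.range n, F k := Fin.sum_univ_eq_sum_range F n
      _ = ∑ k ∈ Finset.range m, F k := by
          refine (Finset.sum_subset (Finset.range_subset_range.2 h) ?_).symm
          intro k _ hk
          have hk' : ¬ k < m := by simpa using hk
          simp [hF, dif_neg hk']
      _ = ∑ k : Fin m, F (k : ℕ) := (Fin.sum_univ_eq_sum_range F m).symm
      _ = ∑ k : Fin m, (inner ℂ (x k) (y k) : ℂ) := by
          refine Finset.sum_congr rfl fun k _ => ?_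
          simp [hF, dif_pos k.isLt]
  exact ⟨T.isometryOfInner key⟩

/-- **Theorem 2.7 (local maximum property, Hunt–Murray).**  Let `q ∈ {0,…,n-1}` and let
`Ω` be a relatively compact open set in `ℂⁿ`.  Then every function `ψ` which is upper
semicontinuous on `closure Ω` and `q`-plurisubharmonic on `Ω` satisfies
`max_{closure Ω} ψ = max_{∂Ω} ψ`. -/
theorem local_maximum_property (n q : ℕ) (hn : 1 ≤ n) (hq : q ≤ n - 1)
    (Ω : Set (ℂE n)) (hΩo : IsOpen Ω) (hΩne : Ω.Nonempty)
    (hΩc : IsCompact (closure Ω))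
    (ψ : ℂE n → ℝ) (husc : UpperSemicontinuousOn ψ (closure Ω))
    (hpsh : QPlurisubharmonicOn n q ψ Ω) :
    sSup (ψ '' closure Ω) = sSup (ψ '' frontier Ω) := by
  classical
  have hq1 : q + 1 ≤ n := by omega
  haveI : Nontrivial (ℂE n) := by
    refine nontrivial_of_ne (EuclideanSpace.single ⟨0, hn⟩ (1 : ℂ)) 0 ?_
    intro hcontra
    have h0 := congrArg (fun v : ℂE n => v ⟨0, hn⟩) hcontra
    simp [EuclideanSpace.single_apply] at h0
  -- frontier is nonempty
  have hFne : (frontier Ω).Nonempty := by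
    by_contra hF
    rw [not_nonempty_iff_eq_empty] at hF
    have hclopen : IsClopen Ω := isClopen_iff_frontier_eq_empty.mpr hF
    rcases isClopen_iff.mp hclopen with h | h
    · exact hΩne.ne_empty h
    · exact noncompact_univ (ℂE n) (by simpa [h] using hΩc)
  have hKne : (closure Ω).Nonempty := hΩne.closure
  have hFK : frontier Ω ⊆ closure Ω := frontier_subset_closure
  obtain ⟨zM, hzM, hzMmax⟩ := usc_exists_max hΩc hKne husc
  have hbdd : BddAbove (ψ '' closure Ω) := by
    refine ⟨ψ zM, ?_⟩
    rintro _ ⟨z, hz, rfl⟩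
    exact hzMmax z hz
  have hbddF : BddAbove (ψ '' frontier Ω) := hbdd.mono (image_mono (f := ψ) hFK)
  have hle : sSup (ψ '' frontier Ω) ≤ sSup (ψ '' closure Ω) :=
    csSup_le_csSup hbdd (hFne.image ψ) (image_mono (f := ψ) hFK)
  refine le_antisymm ?_ hle
  by_contra hlt
  push_neg at hlt
  -- hlt : sSup (ψ '' frontier Ω) < sSup (ψ '' closure Ω)
  set M := sSup (ψ '' closure Ω) with hM
  set MF := sSup (ψ '' frontier Ω) with hMF
  set δ := M - MF with hδdef
  have hδ : 0 < δ := by simp only [hδdef]; linarith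
  -- a bound for the norm on the closure
  obtain ⟨B0, hB0⟩ := hΩc.isBounded.subset_closedBall 0
  set B : ℝ := max B0 1 with hBdef
  have hB1 : (1 : ℝ) ≤ B := le_max_right _ _
  have hBpos : 0 < B := lt_of_lt_of_le one_pos hB1
  have hBsq : ∀ z ∈ closure Ω, ‖z‖ ^ 2 ≤ B ^ 2 := by
    intro z hz
    have h1 : ‖z‖ ≤ B0 := mem_closedBall_zero_iff.mp (hB0 hz)
    have h2 : ‖z‖ ≤ B := le_trans h1 (le_max_left _ _)
    nlinarith [norm_nonneg z]
  set ε : ℝ := δ / (2 * B ^ 2) with hεdef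
  have hε0 : 0 < ε := by
    apply div_pos hδ
    nlinarith
  have hεB : ε * B ^ 2 = δ / 2 := by
    rw [hεdef, div_mul_eq_mul_div, div_eq_div_iff (by positivity) (by norm_num)]
    ring
  set φ : ℂE n → ℝ := fun z => ψ z + ε * ‖z‖ ^ 2 with hφdef
  have hφusc : UpperSemicontinuousOn φ (closure Ω) := by
    refine husc.add ?_
    exact (continuous_const.mul (continuous_norm.pow 2)).continuousOn.upperSemicontinuousOn
  obtain ⟨z₀, hz₀K, hz₀max⟩ := usc_exists_max hΩc hKne hφusc
  have hMle : M ≤ φ z₀ := by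
    refine csSup_le (hKne.image ψ) ?_
    rintro _ ⟨z, hz, rfl⟩
    have h1 : ψ z ≤ φ z := by
      simp only [hφdef]
      nlinarith [norm_nonneg z, sq_nonneg ‖z‖]
    exact le_trans h1 (hz₀max z hz)
  have hz₀Ω : z₀ ∈ Ω := by
    by_contra hno
    have hzF : z₀ ∈ frontier Ω := by
      rw [hΩo.frontier_eq]
      exact ⟨hz₀K, hno⟩
    have h1 : ψ z₀ ≤ MF := le_csSup hbddF (mem_image_of_mem ψ hzF)
    have h2 : ε * ‖z₀‖ ^ 2 ≤ δ / 2 := by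
      rw [← hεB]
      have := hBsq z₀ hz₀K
      nlinarith
    have h3 : φ z₀ ≤ MF + δ / 2 := by
      simp only [hφdef]
      linarith
    have h4 : M ≤ MF + δ / 2 := le_trans hMle h3
    simp only [hδdef] at h4
    linarith
  -- choose a small closed ball around z₀ inside Ω
  obtain ⟨r, hr0, hballr⟩ := Metric.isOpen_iff.mp hΩo z₀ hz₀Ω
  set ρ : ℝ := r / 2 with hρdef
  have hρ0 : 0 < ρ := by positivity
  have hcb : closedBall z₀ ρ ⊆ Ω :=
    subset_trans (closedBall_subset_ball (by simp only [hρdef]; linarith)) hballr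
  -- the affine slice
  obtain ⟨L⟩ := exists_linear_isometry_of_le (q + 1) n hq1
  obtain ⟨-, hsub⟩ := hpsh
  obtain ⟨-, hmain⟩ := hsub z₀ L
  have hpre : closedBall (0 : ℂE (q + 1)) ρ ⊆ (fun w : ℂE (q + 1) => z₀ + L w) ⁻¹' Ω := by
    intro w hw
    have hwn : ‖w‖ ≤ ρ := mem_closedBall_zero_iff.mp hw
    have hdist : dist (z₀ + L w) z₀ ≤ ρ := by
      rw [dist_eq_norm]
      simpa [L.norm_map] using hwn
    exact hcb (mem_closedBall.mpr hdist)
  set hfun : ℂE (q + 1) → ℝ :=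
    fun w => ψ z₀ - ε * ρ ^ 2 - 2 * ε * (inner ℂ z₀ (L w) : ℂ).re with hfundef
  have hplh : PluriharmonicOn hfun univ := by
    intro z _
    refine ⟨univ, isOpen_univ, mem_univ _, subset_rfl,
      fun w => ((ψ z₀ - ε * ρ ^ 2 : ℝ) : ℂ) - ((2 * ε : ℝ) : ℂ) * (inner ℂ z₀ (L w) : ℂ),
      ?_, ?_⟩
    · apply Differentiable.differentiableOn
      have hg : Differentiable ℂ (fun w : ℂE (q + 1) => (inner ℂ z₀ (L w) : ℂ)) := by
        have heq : (fun w : ℂE (q + 1) => (inner ℂ z₀ (L w) : ℂ))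
            = fun w => ((innerSL ℂ z₀).comp L.toContinuousLinearMap) w := by
          funext w
          simp
        rw [heq]
        exact ((innerSL ℂ z₀).comp L.toContinuousLinearMap).differentiable
      exact (hg.const_mul _).const_sub _
    · intro w _
      simp only [hfundef]
      rw [Complex.sub_re, Complex.ofReal_re, Complex.re_ofReal_mul]
  have hsphere : ∀ w ∈ sphere (0 : ℂE (q + 1)) ρ, ψ (z₀ + L w) ≤ hfun w := by
    intro w hw
    have hwn : ‖w‖ = ρ := mem_sphere_zero_iff_norm.mp hw
    have hmem : z₀ + L w ∈ Ω := hpre (by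
      rw [mem_closedBall_zero_iff, hwn])
    have hKmem : z₀ + L w ∈ closure Ω := subset_closure hmem
    have hexp : ‖z₀ + L w‖ ^ 2
        = ‖z₀‖ ^ 2 + 2 * (inner ℂ z₀ (L w) : ℂ).re + ρ ^ 2 := by
      have h1 := @norm_add_sq ℂ _ _ _ _ z₀ (L w)
      rw [L.norm_map, hwn] at h1
      simpa using h1
    have hφle : φ (z₀ + L w) ≤ φ z₀ := hz₀max _ hKmem
    simp only [hφdef] at hφle
    have h3 : ε * ‖z₀ + L w‖ ^ 2
        = ε * ‖z₀‖ ^ 2 + 2 * ε * (inner ℂ z₀ (L w) : ℂ).re + ε * ρ ^ 2 := by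
      rw [hexp]; ring
    simp only [hfundef]
    linarith
  have hfinal := hmain 0 ρ hρ0 hpre univ hfun isOpen_univ (subset_univ _) hplh hsphere 0
    (mem_closedBall_self hρ0.le)
  simp only [hfundef, map_zero, add_zero, inner_zero_right, Complex.zero_re, mul_zero,
    sub_zero] at hfinal
  nlinarith [hfinal, mul_pos hε0 (pow_pos hρ0 2)]

end
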